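/- Already the braid operations alone act transitively on trees with N labeled edges: for any two trees T and T' with N labeled edges there is a finite composition of the operations U_1^{±1}, …, U_{N−1}^{±1} (the operation Λ is not needed) taking (the isomorphism class of) T to (the isomorphism class of) T'. In particular every tree with N labeled edges can be taken by such a composition to the 'bush' tree in which all N edges share a common vertex. -/

import Mathlib

open scoped Classical

/-! Trees with `N` labeled edges.

A tree with `N` labeled edges (on `N+1` vertices) is modeled as a map
`ℓ : ZMod N → Sym2 V` (for `V = Fin (N+1)`) assigning to each label an edge
(an unordered pair of vertices), which is injective, has no loop edges, and whose
edges form a tree.  Two such trees are identified when there is a label-preserving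
graph isomorphism, i.e. a permutation of the vertices carrying one edge-labeling
to the other. -/

/-- The operation `Λ` on trees with labeled edges: the underlying tree is unchanged
and all edge labels are shifted cyclically by one, `i ↦ (i+1) mod N`
(so the edge labeled `i` of the new tree is the edge labeled `i-1` of the old one). -/
def treeLam {N : ℕ} {V : Type*} (ℓ : ZMod N → Sym2 V) : ZMod N → Sym2 V :=
  fun i => ℓ (i - 1)

/-- The operation `U_k` on trees with labeled edges: if the edges labeled `k-1` and `k`
have no common vertex, the two labels are exchanged; if the edge labeled `k-1` joins
`A` and `B` and the edge labeled `k` joins `A` and `C`, then the edge `AB` receives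
label `k`, the edge `AC` is deleted, and a new edge `BC` labeled `k-1` is added. -/
noncomputable def treeU {N : ℕ} {V : Type*}
    (k : ZMod N) (ℓ : ZMod N → Sym2 V) : ZMod N → Sym2 V :=
  if h : ∃ a, a ∈ ℓ (k - 1) ∧ a ∈ ℓ k then
    -- the common vertex is `A := h.choose`; `B`, `C` are the other endpoints
    fun i =>
      if i = k - 1 then
        Sym2.mk (Sym2.Mem.other h.choose_spec.1) (Sym2.Mem.other h.choose_spec.2)
      else if i = k then ℓ (k - 1)
      else ℓ i
  else
    fun i =>
      if i = k - 1 then ℓ k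
      else if i = k then ℓ (k - 1)
      else ℓ i

/-- Two edge-labelings are equivalent iff some label-preserving graph isomorphism
(a permutation of the vertices) carries one to the other. -/
def treeEquiv {N : ℕ} {V : Type*} (ℓ ℓ' : ZMod N → Sym2 V) : Prop :=
  ∃ σ : Equiv.Perm V, ∀ i, ℓ' i = Sym2.map σ (ℓ i)

/-- `ℓ` is a tree with `N` labeled edges: the `N` assigned edges are distinct non-loops
and form a (connected, acyclic) tree on the `N+1` vertices. -/
def IsLTree {N : ℕ} (ℓ : ZMod N → Sym2 (Fin (N + 1))) : Prop :=
  Function.Injective ℓ ∧ (∀ i, ¬ (ℓ i).IsDiag) ∧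
    (SimpleGraph.fromEdgeSet (Set.range ℓ)).IsTree

/-- One braid move on trees with labeled edges: apply some `U_k` (`1 ≤ k ≤ N-1`) and pass
to any isomorphic labeled tree. -/
def treeUStep (N : ℕ) (a b : ZMod N → Sym2 (Fin (N + 1))) : Prop :=
  ∃ k : ℕ, 1 ≤ k ∧ k ≤ N - 1 ∧ treeEquiv (treeU (k : ZMod N) a) b

/-! Grow a bush label by label. If the edges labeled `< j` all pass through `v`, connectivity
and counting give an edge `xy` labeled `m ≥ j` with `x` on this star and `y` off it. Each move
`U_k^{±1}` either exchanges the labels of two disjoint edges or slides one edge along the other,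
so it keeps trees trees, and a chain of inverse moves carries the edge labeled `m` down to any
smaller label. If `x = v`, it goes to label `j`. Otherwise `x` ends the star edge `vx` labeled
`b`: the edge `xy` goes to label `b + 1`, passing only star edges, which are disjoint from it and
move up one label unchanged, and then `U_{b+1}` turns the pair `vx, xy` into `vy, xv`.
Any two bushes are isomorphic as labeled trees and the moves can be reversed, so all labeled trees
are connected. -/

lemma ZMod.natCast_inj_of_lt {N a b : ℕ} (ha : a < N) (hb : b < N) :
    (a : ZMod N) = b ↔ a = b :=
  ⟨fun h => ((ZMod.natCast_eq_natCast_iff a b N).mp h).eq_of_lt_of_lt ha hb, congrArg _⟩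

lemma ZMod.natCast_ne_natCast_of_lt {N a b : ℕ} (ha : a < N) (hb : b < N) (hab : a ≠ b) :
    (a : ZMod N) ≠ b :=
  (ZMod.natCast_inj_of_lt ha hb).not.mpr hab

lemma ZMod.natCast_ne_natCast_add_one {N t : ℕ} (ht : t + 1 < N) : (t : ZMod N) ≠ t + 1 := by
  rw [← Nat.cast_succ, Ne, ZMod.natCast_inj_of_lt (by omega) ht]
  omega

namespace SimpleGraph

variable {V : Type*} {G H : SimpleGraph V}

lemma Preconnected.of_forall_adj_reachable (hG : G.Preconnected)
    (h : ∀ u v, G.Adj u v → H.Reachable u v) : H.Preconnected := by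
  intro u v
  obtain ⟨p⟩ := hG u v
  induction p with
  | nil => rfl
  | cons hadj _ ih => exact (h _ _ hadj).trans ih

lemma IsAcyclic.not_adj_of_adj_of_adj {a b c : V} (hG : G.IsAcyclic) (hab : G.Adj a b)
    (hac : G.Adj a c) : ¬G.Adj b c := fun hbc =>
  hG.cliqueFree le_rfl {a, b, c} (is3Clique_triple_iff.mpr ⟨hab, hac, hbc⟩)

lemma isTree_of_connected_of_card_le [Finite V] (hG : G.Connected)
    (hcard : Nat.card G.edgeSet + 1 ≤ Nat.card V) : G.IsTree :=
  isTree_iff_connected_and_card.mpr ⟨hG, le_antisymm hcard hG.card_vert_le_card_edgeSet_add_one⟩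

lemma fromEdgeSet_range_adj {ι : Type*} {f : ι → Sym2 V} {i : ι} {u w : V}
    (hi : f i = s(u, w)) (huw : u ≠ w) : (fromEdgeSet (Set.range f)).Adj u w :=
  (fromEdgeSet_adj _).mpr ⟨⟨i, hi⟩, huw⟩

end SimpleGraph

lemma Sym2.other_eq_of_eq_mk {α : Type*} {a b : α} {z : Sym2 α} (h : a ∈ z) (hz : z = s(a, b)) :
    Sym2.Mem.other h = b := by
  subst hz
  exact Sym2.congr_right.mp (Sym2.other_spec h)

open SimpleGraph Function

section Labelings

variable {N : ℕ} {V : Type*} {ℓ : ZMod N → Sym2 V} {p : ZMod N} {x b c : V}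

lemma treeU_add_one_of_not_exists (h : ¬∃ a, a ∈ ℓ p ∧ a ∈ ℓ (p + 1)) :
    treeU (p + 1) ℓ = ℓ ∘ Equiv.swap p (p + 1) := by
  rw [treeU, dif_neg (by rwa [add_sub_cancel_right])]
  funext i
  simp only [add_sub_cancel_right, comp_apply]
  rcases eq_or_ne i p with rfl | hip
  · simp
  rcases eq_or_ne i (p + 1) with rfl | hiq
  · simp [hip]
  · simp [hip, hiq, Equiv.swap_apply_of_ne_of_ne]

lemma treeU_add_one_of_eq_mk (hb : ℓ p = s(x, b)) (hc : ℓ (p + 1) = s(x, c)) (hbc : b ≠ c)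
    (hp : p ≠ p + 1) :
    treeU (p + 1) ℓ = update ℓ (p + 1) s(b, c) ∘ Equiv.swap p (p + 1) := by
  have hex : ∃ a, a ∈ ℓ (p + 1 - 1) ∧ a ∈ ℓ (p + 1) := ⟨x, by simp [hb, hc]⟩
  have hx : hex.choose = x := by
    obtain ⟨h1, h2⟩ := hex.choose_spec
    generalize hex.choose = a at h1 h2 ⊢
    simp only [add_sub_cancel_right, hb, hc, Sym2.mem_iff] at h1 h2
    rcases h1 with h1 | h1
    · exact h1
    rcases h2 with h2 | h2
    · exact h2
    · exact absurd (h1.symm.trans h2) hbc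
  have hother_b : Sym2.Mem.other hex.choose_spec.1 = b :=
    Sym2.other_eq_of_eq_mk _ (by rw [hx, add_sub_cancel_right, hb])
  have hother_c : Sym2.Mem.other hex.choose_spec.2 = c :=
    Sym2.other_eq_of_eq_mk _ (by rw [hx, hc])
  rw [treeU, dif_pos hex, hother_b, hother_c]
  funext i
  simp only [add_sub_cancel_right, comp_apply]
  rcases eq_or_ne i p with rfl | hip
  · simp
  rcases eq_or_ne i (p + 1) with rfl | hiq
  · simp [hip, hp]
  · simp [hip, hiq, Equiv.swap_apply_of_ne_of_ne]

end Labelings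

section LabeledTrees

variable {N : ℕ} {ℓ : ZMod N → Sym2 (Fin (N + 1))}

lemma isLTree_of_connected (hinj : Injective ℓ) (hdiag : ∀ i, ¬(ℓ i).IsDiag)
    (hconn : (fromEdgeSet (Set.range ℓ)).Connected) : IsLTree ℓ := by
  refine ⟨hinj, hdiag, isTree_of_connected_of_card_le hconn ?_⟩
  have hedges : Nat.card (fromEdgeSet (Set.range ℓ)).edgeSet ≤ (Set.range ℓ).ncard := by
    rw [Nat.card_coe_set_eq, edgeSet_fromEdgeSet]
    exact Set.ncard_le_ncard Set.sdiff_subset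
  rw [Set.ncard_range_of_injective hinj, Nat.card_zmod] at hedges
  simpa using hedges

lemma IsLTree.comp_perm (h : IsLTree ℓ) (σ : Equiv.Perm (ZMod N)) : IsLTree (ℓ ∘ σ) :=
  ⟨h.1.comp σ.injective, fun i => h.2.1 (σ i), by rw [σ.surjective.range_comp]; exact h.2.2⟩

lemma IsLTree.ne_of_eq_mk (h : IsLTree ℓ) {i : ZMod N} {u w : Fin (N + 1)} (hi : ℓ i = s(u, w)) :
    u ≠ w := fun huw => h.2.1 i (by rw [hi, huw]; exact Sym2.mk_isDiag_iff.mpr rfl)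

lemma IsLTree.adj (h : IsLTree ℓ) {i : ZMod N} {u w : Fin (N + 1)} (hi : ℓ i = s(u, w)) :
    (fromEdgeSet (Set.range ℓ)).Adj u w :=
  fromEdgeSet_range_adj hi (h.ne_of_eq_mk hi)

/-- `bc` is not yet an edge, as it would close a triangle with `xb` and `xc`. -/
lemma IsLTree.update_slide (h : IsLTree ℓ) {p q : ZMod N} {x b c : Fin (N + 1)} (hpq : p ≠ q)
    (hb : ℓ p = s(x, b)) (hc : ℓ q = s(x, c)) : IsLTree (update ℓ q s(b, c)) := by
  obtain ⟨hinj, hdiag, hconn, hacyc⟩ := id h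
  have hbc : b ≠ c := fun e => hpq (hinj (by rw [hb, hc, e]))
  have hnew : ∀ i, ℓ i ≠ s(b, c) := fun i hi =>
    hacyc.not_adj_of_adj_of_adj (h.adj hb) (h.adj hc) (h.adj hi)
  have hother : ∀ i, i ≠ q → update ℓ q s(b, c) i = ℓ i := fun i hi => update_of_ne hi _ _
  refine isLTree_of_connected ?_ ?_ ⟨?_⟩
  · intro i j hij
    rcases eq_or_ne i q with hi | hi <;> rcases eq_or_ne j q with hj | hj
    · rw [hi, hj]
    · rw [hi, update_self, hother j hj] at hij
      exact absurd hij.symm (hnew j)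
    · rw [hj, update_self, hother i hi] at hij
      exact absurd hij (hnew i)
    · exact hinj (by rwa [hother i hi, hother j hj] at hij)
  · intro i
    rcases eq_or_ne i q with rfl | hi
    · rw [update_self, Sym2.mk_isDiag_iff]
      exact hbc
    · rw [hother i hi]
      exact hdiag i
  · refine hconn.preconnected.of_forall_adj_reachable fun u w huw => ?_
    obtain ⟨⟨i, hi⟩, hne⟩ := (fromEdgeSet_adj _).mp huw
    rcases eq_or_ne i q with rfl | hiq
    · have hxc : (fromEdgeSet (Set.range (update ℓ i s(b, c)))).Reachable x c :=
        (fromEdgeSet_range_adj (i := p) (by rw [hother p hpq, hb])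
          (h.ne_of_eq_mk hb)).reachable.trans
          (fromEdgeSet_range_adj (update_self i _ ℓ) hbc).reachable
      rw [hc, Sym2.eq_iff] at hi
      rcases hi with ⟨rfl, rfl⟩ | ⟨rfl, rfl⟩
      · exact hxc
      · exact hxc.symm
    · exact (fromEdgeSet_range_adj (by rw [hother i hiq, hi]) hne).reachable

end LabeledTrees

section Moves

variable {N : ℕ} {ℓ : ZMod N → Sym2 (Fin (N + 1))}

def braidMove (N : ℕ) (x y : ZMod N → Sym2 (Fin (N + 1))) : Prop :=
  treeUStep N x y ∨ treeUStep N y x ∨ treeEquiv x y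

lemma treeEquiv_refl (ℓ : ZMod N → Sym2 (Fin (N + 1))) : treeEquiv ℓ ℓ :=
  ⟨1, fun i => by simp⟩

lemma treeEquiv.symm {ℓ ℓ' : ZMod N → Sym2 (Fin (N + 1))} (h : treeEquiv ℓ ℓ') :
    treeEquiv ℓ' ℓ := by
  obtain ⟨σ, hσ⟩ := h
  exact ⟨σ⁻¹, fun i => by simp [hσ i, Sym2.map_map]⟩

instance : Std.Symm (braidMove N) where
  symm _ _
    | .inl h => .inr (.inl h)
    | .inr (.inl h) => .inl h
    | .inr (.inr h) => .inr (.inr h.symm)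

lemma braidMove_treeU {t : ℕ} (ht : t + 1 < N) (ℓ : ZMod N → Sym2 (Fin (N + 1))) :
    braidMove N ℓ (treeU ((t : ZMod N) + 1) ℓ) :=
  Or.inl ⟨t + 1, by omega, by omega, by rw [Nat.cast_succ]; exact treeEquiv_refl _⟩

lemma IsLTree.exists_braidMove_down (h : IsLTree ℓ) {t : ℕ} (ht : t + 1 < N) :
    ∃ ℓ', IsLTree ℓ' ∧ braidMove N ℓ ℓ' ∧ ℓ' t = ℓ (t + 1) ∧
      (∀ i, i ≠ (t : ZMod N) → i ≠ t + 1 → ℓ' i = ℓ i) ∧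
      ((¬∃ a, a ∈ ℓ t ∧ a ∈ ℓ (t + 1)) → ℓ' (t + 1) = ℓ t) := by
  set T : ZMod N := (t : ZMod N)
  have hT : T ≠ T + 1 := ZMod.natCast_ne_natCast_add_one ht
  by_cases hshared : ∃ a, a ∈ ℓ T ∧ a ∈ ℓ (T + 1)
  · obtain ⟨x, hxq, hxr⟩ := hshared
    set q := Sym2.Mem.other hxq
    set r := Sym2.Mem.other hxr
    have hq : ℓ T = s(x, q) := (Sym2.other_spec hxq).symm
    have hr : ℓ (T + 1) = s(x, r) := (Sym2.other_spec hxr).symm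
    -- `U_{t+1}` slides `q` back from `r` to `x`
    set ℓ' := update ℓ T s(r, q) ∘ Equiv.swap T (T + 1)
    have hℓ'T : ℓ' T = s(r, x) := by simp [ℓ', hT.symm, hr, Sym2.eq_swap]
    have hℓ'T1 : ℓ' (T + 1) = s(r, q) := by simp [ℓ']
    have hℓ' : ∀ i, i ≠ T → i ≠ T + 1 → ℓ' i = ℓ i := fun i h1 h2 => by
      simp [ℓ', Equiv.swap_apply_of_ne_of_ne h1 h2, h1]
    have hU : treeU (T + 1) ℓ' = ℓ := by
      rw [treeU_add_one_of_eq_mk hℓ'T hℓ'T1 (h.ne_of_eq_mk hq) hT]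
      funext i
      rcases eq_or_ne i T with rfl | h1
      · simp [hq]
      rcases eq_or_ne i (T + 1) with rfl | h2
      · simp [hT, hℓ'T, hr, Sym2.eq_swap]
      · simp [Equiv.swap_apply_of_ne_of_ne h1 h2, h2, hℓ' i h1 h2]
    refine ⟨ℓ', (h.update_slide hT.symm hr hq).comp_perm _,
      symm (hU ▸ braidMove_treeU ht ℓ'), by rw [hℓ'T, hr, Sym2.eq_swap], hℓ',
      fun hdisj => absurd ⟨x, hxq, hxr⟩ hdisj⟩
  · have hU := treeU_add_one_of_not_exists hshared
    refine ⟨_, h.comp_perm (Equiv.swap T (T + 1)), hU ▸ braidMove_treeU ht ℓ, by simp,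
      fun i h1 h2 => by simp [Equiv.swap_apply_of_ne_of_ne h1 h2], fun _ => by simp⟩

end Moves

section Bush

variable {N : ℕ} {ℓ : ZMod N → Sym2 (Fin (N + 1))}

lemma IsLTree.exists_reflTransGen_move_down (h : IsLTree ℓ) {t m : ℕ} (htm : t ≤ m) (hm : m < N) :
    ∃ ℓ', IsLTree ℓ' ∧ Relation.ReflTransGen (braidMove N) ℓ ℓ' ∧ ℓ' t = ℓ m ∧
      (∀ i < t, ℓ' i = ℓ i) ∧
      ∀ i, t ≤ i → i < m → (¬∃ a, a ∈ ℓ i ∧ a ∈ ℓ m) → ℓ' (i + 1) = ℓ i := by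
  induction htm using Nat.decreasingInduction with
  | self => exact ⟨ℓ, h, .refl, rfl, fun _ _ => rfl, fun i h1 h2 => absurd h2 (by omega)⟩
  | of_succ t htm ih =>
    obtain ⟨ℓ₁, h₁, hmoves, hℓ₁t, hℓ₁lt, hℓ₁ge⟩ := ih
    push_cast at hℓ₁t
    obtain ⟨ℓ', h', hmove, hℓ't, hℓ'ne, hℓ'disj⟩ := h₁.exists_braidMove_down (t := t) (by omega)
    have hℓ'eq : ∀ i, i < N → i ≠ t → i ≠ t + 1 → ℓ' i = ℓ₁ i := fun i hi h1 h2 =>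
      hℓ'ne i (ZMod.natCast_ne_natCast_of_lt hi (by omega) h1)
        (by exact_mod_cast ZMod.natCast_ne_natCast_of_lt hi (by omega) h2)
    refine ⟨ℓ', h', hmoves.tail hmove, hℓ't.trans hℓ₁t, fun i hi => ?_, fun i hti him hdisj => ?_⟩
    · rw [hℓ'eq i (by omega) (by omega) (by omega), hℓ₁lt i (by omega)]
    · obtain rfl | hti := eq_or_lt_of_le hti
      · rw [hℓ'disj (by rwa [hℓ₁t, hℓ₁lt t (by omega)]), hℓ₁lt t (by omega)]
      · have := hℓ'eq (i + 1) (by omega) (by omega) (by omega)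
        push_cast at this
        rw [this, hℓ₁ge i hti him hdisj]

lemma IsLTree.exists_edge_leaving_star [NeZero N] (h : IsLTree ℓ) {j : ℕ} (hj : j < N)
    {v : Fin (N + 1)} (hv : ∀ i < j, v ∈ ℓ i) :
    ∃ m x y, j ≤ m ∧ m < N ∧ ℓ m = s(x, y) ∧ (x = v ∨ ∃ b < j, ℓ b = s(v, x)) ∧
      ∀ i < j, y ∉ ℓ i := by
  let leaf : Fin j → Fin (N + 1) := fun i => Sym2.Mem.other (hv i i.2)
  have hleaf : ∀ i : Fin j, ℓ i = s(v, leaf i) := fun i => (Sym2.other_spec _).symm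
  let S : Finset (Fin (N + 1)) := insert v (Finset.univ.image leaf)
  have hS : S.card < (Finset.univ : Finset (Fin (N + 1))).card := calc
    S.card ≤ (Finset.univ.image leaf).card + 1 := Finset.card_insert_le _ _
    _ ≤ j + 1 := by simpa using Finset.card_image_le (s := Finset.univ) (f := leaf)
    _ < _ := by simpa using hj
  obtain ⟨w, -, hw⟩ := Finset.exists_mem_notMem_of_card_lt_card hS
  obtain ⟨p⟩ := h.2.2.connected.preconnected v w
  obtain ⟨d, -, hx, hy⟩ := p.exists_boundary_dart (S : Set (Fin (N + 1))) (by simp [S])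
    (by simpa using hw)
  obtain ⟨⟨k, hk⟩, -⟩ := (fromEdgeSet_adj _).mp d.adj
  have hk' : ℓ k.val = s(d.fst, d.snd) := by rw [ZMod.natCast_zmod_val, hk]
  have hy' : ∀ i < j, d.snd ∉ ℓ i := fun i hi hyi => hy <| by
    rw [hleaf ⟨i, hi⟩, Sym2.mem_iff] at hyi
    rcases hyi with hyi | hyi <;> simp [S, hyi]
  refine ⟨k.val, d.fst, d.snd, ?_, k.val_lt, hk', ?_, hy'⟩
  · by_contra hkj
    exact hy' k.val (by omega) (by rw [hk']; exact Sym2.mem_mk_right _ _)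
  · simp only [S, Finset.coe_insert, Finset.coe_image, Finset.coe_univ, Set.image_univ,
      Set.mem_insert_iff, Set.mem_range] at hx
    rcases hx with hx | ⟨b, hb⟩
    · exact .inl hx
    · exact .inr ⟨b, b.2, by rw [hleaf, hb]⟩

lemma IsLTree.exists_reflTransGen_star_succ_of_leaf (h : IsLTree ℓ) {j m b : ℕ}
    {v x y : Fin (N + 1)} (hjm : j ≤ m) (hm : m < N) (hb : b < j) (hv : ∀ i < j, v ∈ ℓ i)
    (hbx : ℓ b = s(v, x)) (hxy : ℓ m = s(x, y)) (hy : ∀ i < j, y ∉ ℓ i) :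
    ∃ ℓ', IsLTree ℓ' ∧ Relation.ReflTransGen (braidMove N) ℓ ℓ' ∧ ∀ i < j + 1, v ∈ ℓ' i := by
  have hvx : v ≠ x := h.ne_of_eq_mk hbx
  have hvy : v ≠ y := fun e => hy b hb (e ▸ hv b hb)
  have hdisj : ∀ i, b + 1 ≤ i → i < j → ¬∃ a, a ∈ ℓ i ∧ a ∈ ℓ m := by
    rintro i hbi hij ⟨a, hai, ham⟩
    rw [hxy, Sym2.mem_iff] at ham
    rcases ham with rfl | rfl
    · have := h.1 (((Sym2.mem_and_mem_iff hvx).mp ⟨hv i hij, hai⟩).trans hbx.symm)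
      rw [ZMod.natCast_inj_of_lt (by omega) (by omega)] at this
      omega
    · exact hy i hij hai
  obtain ⟨ℓ₁, h₁, hmoves, hℓ₁b, hℓ₁lt, hℓ₁ge⟩ :=
    h.exists_reflTransGen_move_down (t := b + 1) (by omega) hm
  have hB : ℓ₁ b = s(x, v) := by rw [hℓ₁lt b (by omega), hbx, Sym2.eq_swap]
  have hB1 : ℓ₁ (b + 1) = s(x, y) := by rw [← Nat.cast_succ, hℓ₁b, hxy]
  have hne := ZMod.natCast_ne_natCast_add_one (N := N) (t := b) (by omega)
  have hU := treeU_add_one_of_eq_mk hB hB1 hvy hne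
  refine ⟨_, (h₁.update_slide hne hB hB1).comp_perm _,
    hmoves.tail (hU ▸ braidMove_treeU (by omega) ℓ₁), fun i hi => ?_⟩
  obtain hib | rfl | hib := lt_trichotomy i b
  · have h1 := ZMod.natCast_ne_natCast_of_lt (N := N) (by omega) (by omega) hib.ne
    have h2 := ZMod.natCast_ne_natCast_of_lt (N := N) (a := i) (b := b + 1) (by omega)
      (by omega) (by omega)
    push_cast at h2
    simpa [Equiv.swap_apply_of_ne_of_ne h1 h2, h2, hℓ₁lt i (by omega)] using hv i (by omega)
  · simp
  · obtain rfl | hib := eq_or_lt_of_le (Nat.succ_le_of_lt hib)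
    · simp [hne, hB]
    · obtain ⟨i, rfl⟩ : ∃ i', i = i' + 1 := ⟨i - 1, by omega⟩
      have h1 := ZMod.natCast_ne_natCast_of_lt (N := N) (a := i + 1) (b := b) (by omega)
        (by omega) (by omega)
      have h2 := ZMod.natCast_ne_natCast_of_lt (N := N) (a := i + 1) (b := b + 1) (by omega)
        (by omega) (by omega)
      push_cast at h1 h2
      simpa [Equiv.swap_apply_of_ne_of_ne h1 h2, h2,
        hℓ₁ge i (by omega) (by omega) (hdisj i (by omega) (by omega))] using hv i (by omega)

lemma IsLTree.exists_reflTransGen_star_succ [NeZero N] (h : IsLTree ℓ) {j : ℕ} (hj : j < N)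
    {v : Fin (N + 1)} (hv : ∀ i < j, v ∈ ℓ i) :
    ∃ ℓ', IsLTree ℓ' ∧ Relation.ReflTransGen (braidMove N) ℓ ℓ' ∧ ∀ i < j + 1, v ∈ ℓ' i := by
  obtain ⟨m, x, y, hjm, hm, hxy, rfl | ⟨b, hb, hbx⟩, hy⟩ := h.exists_edge_leaving_star hj hv
  · obtain ⟨ℓ', h', hmoves, hℓ'j, hℓ'lt, -⟩ := h.exists_reflTransGen_move_down hjm hm
    refine ⟨ℓ', h', hmoves, fun i hi => ?_⟩
    obtain hi | rfl := Nat.lt_succ_iff_lt_or_eq.mp hi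
    · rw [hℓ'lt i hi]
      exact hv i hi
    · rw [hℓ'j, hxy]
      exact Sym2.mem_mk_left _ _
  · exact h.exists_reflTransGen_star_succ_of_leaf hjm hm hb hv hbx hxy hy

lemma IsLTree.exists_reflTransGen_bush [NeZero N] (h : IsLTree ℓ) (v : Fin (N + 1)) :
    ∃ c, IsLTree c ∧ (∀ i, v ∈ c i) ∧ Relation.ReflTransGen (braidMove N) ℓ c := by
  have star : ∀ j ≤ N, ∃ ℓ', IsLTree ℓ' ∧ Relation.ReflTransGen (braidMove N) ℓ ℓ' ∧
      ∀ i < j, v ∈ ℓ' i := by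
    intro j hj
    induction j with
    | zero => exact ⟨ℓ, h, .refl, fun i hi => absurd hi (Nat.not_lt_zero i)⟩
    | succ j ih =>
      obtain ⟨ℓ₁, h₁, hmoves, hv⟩ := ih (by omega)
      obtain ⟨ℓ', h', hmoves', hv'⟩ := h₁.exists_reflTransGen_star_succ (by omega) hv
      exact ⟨ℓ', h', hmoves.trans hmoves', hv'⟩
  obtain ⟨c, hc, hmoves, hv⟩ := star N le_rfl
  exact ⟨c, hc, fun i => by simpa using hv i.val i.val_lt, hmoves⟩

lemma IsLTree.exists_equiv_of_forall_mem [NeZero N] {c : ZMod N → Sym2 (Fin (N + 1))}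
    (hc : IsLTree c) {v : Fin (N + 1)} (hv : ∀ i, v ∈ c i) :
    ∃ e : Option (ZMod N) ≃ Fin (N + 1), ∀ i, c i = s(e none, e (some i)) := by
  let f : Option (ZMod N) → Fin (N + 1) := fun o => o.elim v fun i => Sym2.Mem.other (hv i)
  have hf : ∀ i, c i = s(f none, f (some i)) := fun i => (Sym2.other_spec (hv i)).symm
  have hfv : ∀ i, f (some i) ≠ f none := fun i => Sym2.other_ne (hc.2.1 i) (hv i)
  have hinj : Injective f := by
    rintro (_ | i) (_ | j) hij
    · rfl
    · exact absurd hij.symm (hfv j)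
    · exact absurd hij (hfv i)
    · exact congrArg some (hc.1 (by rw [hf i, hf j, hij]))
  exact ⟨.ofBijective f ((Fintype.bijective_iff_injective_and_card f).mpr ⟨hinj, by simp⟩), hf⟩

lemma treeEquiv_of_forall_mem [NeZero N] {c c' : ZMod N → Sym2 (Fin (N + 1))} (hc : IsLTree c)
    (hc' : IsLTree c') {v v' : Fin (N + 1)} (hv : ∀ i, v ∈ c i) (hv' : ∀ i, v' ∈ c' i) :
    treeEquiv c c' := by
  obtain ⟨e, he⟩ := hc.exists_equiv_of_forall_mem hv
  obtain ⟨e', he'⟩ := hc'.exists_equiv_of_forall_mem hv'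
  exact ⟨e.symm.trans e', fun i => by simp [he, he']⟩

end Bush

/-- already the braid operations `U_1^{±1}, …, U_{N-1}^{±1}` alone (without `Λ`)
act transitively on isomorphism classes of trees with `N` labeled edges; in particular every
tree with `N` labeled edges can be taken by such a composition to the "bush" tree in which
all `N` edges share a common vertex. -/
theorem stmt_6 (N : ℕ) (hN : 1 ≤ N) (a b : ZMod N → Sym2 (Fin (N + 1)))
    (ha : IsLTree a) (hb : IsLTree b) :
    Relation.ReflTransGen
      (fun x y => treeUStep N x y ∨ treeUStep N y x ∨ treeEquiv x y) a b ∧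
    ∃ c : ZMod N → Sym2 (Fin (N + 1)), IsLTree c ∧ (∃ v : Fin (N + 1), ∀ i, v ∈ c i) ∧
      Relation.ReflTransGen
        (fun x y => treeUStep N x y ∨ treeUStep N y x ∨ treeEquiv x y) a c := by
  have : NeZero N := ⟨by omega⟩
  obtain ⟨c, hc, hv, hac⟩ := ha.exists_reflTransGen_bush 0
  obtain ⟨c', hc', hv', hbc'⟩ := hb.exists_reflTransGen_bush 0
  have hcc' : braidMove N c c' := .inr (.inr (treeEquiv_of_forall_mem hc hc' hv hv'))
  exact ⟨(hac.tail hcc').trans (symm hbc'), c, hc, ⟨0, hv⟩, hac⟩
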